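/- Let G be the standard Gaussian density, δ ∈ (0,1), ε ∈ (0, δ/8), and define the measure G_{δ,ε} with density (δ/(2ε))·G(x) on ∪_{n∈ℤ}[nδ-ε, nδ+ε] and 0 elsewhere. Then the total mass ‖G_{δ,ε}‖₁ is at least 1/5. -/

import Mathlib

/-!
Each tooth `[nδ - ε, nδ + ε]` with `n ≥ 0` carries mass `(δ / 2ε) ∫ G ≥ δ G(nδ + ε)`, which, `G`
being decreasing on `[0, ∞)`, dominates `∫ G` over the gap `[nδ + ε, (n + 1)δ + ε]` to the right.
Summing over `n < N` with `Nδ ≥ 9/8`, the total mass is at least `∫ G` over `[ε, Nδ + ε] ⊇ [1/8, 9/8]`,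
hence at least `G(9/8) ≥ 1/5`.
-/

open Real

noncomputable def stdG (x : ℝ) : ℝ := (Real.sqrt (2 * Real.pi))⁻¹ * Real.exp (-x ^ 2 / 2)

open Classical in
noncomputable def Gde (δ ε x : ℝ) : ℝ :=
  if ∃ n : ℤ, |x - n * δ| ≤ ε then (δ / (2 * ε)) * stdG x else 0

open MeasureTheory Set Finset Function

theorem MeasureTheory.sum_setIntegral_le_integral {α ι : Type*} [MeasurableSpace α]
    {μ : Measure α} {f : α → ℝ} (hf : Integrable f μ) (hf0 : 0 ≤ᵐ[μ] f) (t : Finset ι)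
    {s : ι → Set α} (hs : ∀ i ∈ t, MeasurableSet (s i))
    (hd : (t : Set ι).Pairwise (Disjoint on s)) :
    ∑ i ∈ t, ∫ x in s i, f x ∂μ ≤ ∫ x, f x ∂μ := by
  rw [← integral_biUnion_finset t hs hd fun i _ => hf.integrableOn]
  exact setIntegral_le_integral hf hf0

theorem pairwise_disjoint_Ioc_mul_sub_mul_add {δ ε : ℝ} (hε : 0 ≤ ε) (h : 2 * ε ≤ δ) :
    Pairwise (Disjoint on fun n : ℕ => Ioc (n * δ - ε) (n * δ + ε)) := by
  refine (pairwise_disjoint_on _).2 fun m n hmn => Ioc_disjoint_Ioc_of_le ?_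
  have : (m + 1 : ℝ) * δ ≤ n * δ := by gcongr; linarith; exact_mod_cast hmn
  linarith

theorem stdG_nonneg (x : ℝ) : 0 ≤ stdG x := by
  unfold stdG
  positivity

theorem stdG_le_of_abs_le {x y : ℝ} (h : |x| ≤ |y|) : stdG y ≤ stdG x := by
  unfold stdG
  have := sq_le_sq.2 h
  gcongr ?_ * exp ?_
  linarith

theorem integrable_stdG : Integrable stdG := by
  have h := (integrable_exp_neg_mul_sq (b := 1 / 2) (by norm_num)).const_mul (√(2 * π))⁻¹
  refine h.congr (ae_of_all _ fun x => ?_)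
  simp only [stdG]
  ring_nf

theorem one_fifth_le_stdG_nine_eighths : 1 / 5 ≤ stdG (9 / 8) := by
  have hexp : (1 - (81 / 128) / 8 : ℝ) ^ 8 ≤ exp (-(9 / 8) ^ 2 / 2) := by
    have := Real.one_sub_div_pow_le_exp_neg (n := 8) (t := 81 / 128) (by norm_num)
    norm_num at this ⊢
    exact this
  have hsq := pow_le_pow_left₀ (by norm_num) hexp 2
  have hsqrt : √(2 * π) ≤ 5 * exp (-(9 / 8) ^ 2 / 2) := by
    rw [Real.sqrt_le_left (by positivity)]
    norm_num at hsq ⊢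
    nlinarith [pi_lt_d2]
  rw [stdG, inv_mul_eq_div, le_div_iff₀ (by positivity)]
  linarith

theorem mul_stdG_le_integral_stdG {a b : ℝ} (hab : a ≤ b) (hba : -b ≤ a) :
    (b - a) * stdG b ≤ ∫ x in a..b, stdG x := by
  have := intervalIntegral.integral_mono_on hab intervalIntegrable_const
    integrable_stdG.intervalIntegrable fun x hx =>
      stdG_le_of_abs_le (abs_le_abs hx.2 (by linarith [hx.1]))
  simpa using this

theorem integral_stdG_le_mul_stdG {a b : ℝ} (ha : 0 ≤ a) (hab : a ≤ b) :
    ∫ x in a..b, stdG x ≤ (b - a) * stdG a := by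
  have := intervalIntegral.integral_mono_on hab integrable_stdG.intervalIntegrable
    intervalIntegrable_const fun x hx =>
      stdG_le_of_abs_le (abs_le_abs hx.1 (by linarith [hx.1]))
  simpa using this

section Gde

variable {δ ε : ℝ}

theorem Gde_of_abs_sub_le {x : ℝ} (n : ℤ) (h : |x - n * δ| ≤ ε) :
    Gde δ ε x = δ / (2 * ε) * stdG x :=
  if_pos ⟨n, h⟩

theorem Gde_nonneg (hδ : 0 ≤ δ) (hε : 0 ≤ ε) (x : ℝ) : 0 ≤ Gde δ ε x := by
  unfold Gde
  split_ifs
  · exact mul_nonneg (by positivity) (stdG_nonneg x)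
  · exact le_rfl

theorem Gde_eq_indicator :
    Gde δ ε = (⋃ n : ℤ, Metric.closedBall (n * δ) ε).indicator fun x => δ / (2 * ε) * stdG x := by
  ext x
  have hmem : x ∈ ⋃ n : ℤ, Metric.closedBall (n * δ) ε ↔ ∃ n : ℤ, |x - n * δ| ≤ ε := by
    simp only [mem_iUnion, Metric.mem_closedBall, Real.dist_eq]
  by_cases h : ∃ n : ℤ, |x - n * δ| ≤ ε
  · rw [Gde, if_pos h, indicator_of_mem (hmem.2 h)]
  · rw [Gde, if_neg h, indicator_of_notMem (mt hmem.1 h)]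

theorem integrable_Gde : Integrable (Gde δ ε) := by
  rw [Gde_eq_indicator]
  exact (integrable_stdG.const_mul _).indicator (.iUnion fun _ => measurableSet_closedBall)

theorem integral_stdG_le_setIntegral_Gde (hδ : 0 ≤ δ) (hε : 0 < ε) (n : ℕ) :
    ∫ x in (n * δ + ε)..((n + 1 : ℕ) * δ + ε), stdG x
      ≤ ∫ x in Ioc (n * δ - ε) (n * δ + ε), Gde δ ε x := by
  have hn : 0 ≤ n * δ := by positivity
  calc ∫ x in (n * δ + ε)..((n + 1 : ℕ) * δ + ε), stdG x
      ≤ ((n + 1 : ℕ) * δ + ε - (n * δ + ε)) * stdG (n * δ + ε) :=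
        integral_stdG_le_mul_stdG (by positivity) (by push_cast; linarith)
    _ = δ / (2 * ε) * ((n * δ + ε - (n * δ - ε)) * stdG (n * δ + ε)) := by
        push_cast
        field_simp
        ring
    _ ≤ δ / (2 * ε) * ∫ x in (n * δ - ε)..(n * δ + ε), stdG x := by
        gcongr
        exact mul_stdG_le_integral_stdG (by linarith) (by linarith)
    _ = ∫ x in Ioc (n * δ - ε) (n * δ + ε), Gde δ ε x := by
        rw [← intervalIntegral.integral_const_mul, intervalIntegral.integral_of_le (by linarith)]
        refine setIntegral_congr_fun measurableSet_Ioc fun x hx => (Gde_of_abs_sub_le n ?_).symm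
        rw [abs_le]
        push_cast
        constructor <;> linarith [hx.1, hx.2]

end Gde

/-- The total mass of G_{δ,ε} is at least 1/5. -/
theorem Gde_total_mass_ge (δ ε : ℝ) (hδ0 : 0 < δ) (hδ1 : δ < 1)
    (hε0 : 0 < ε) (hε : ε < δ / 8) :
    1 / 5 ≤ ∫ x, Gde δ ε x := by
  obtain ⟨N, hN⟩ := exists_nat_ge (9 / 8 / δ)
  have hNδ : 9 / 8 ≤ N * δ := by rwa [div_le_iff₀ hδ0] at hN
  calc 1 / 5 ≤ stdG (9 / 8) := one_fifth_le_stdG_nine_eighths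
    _ = (9 / 8 - 1 / 8) * stdG (9 / 8) := by norm_num
    _ ≤ ∫ x in (1 / 8)..(9 / 8), stdG x := mul_stdG_le_integral_stdG (by norm_num) (by norm_num)
    _ ≤ ∫ x in ε..(N * δ + ε), stdG x :=
        intervalIntegral.integral_mono_interval (by linarith) (by norm_num) (by linarith)
          (ae_of_all _ stdG_nonneg) integrable_stdG.intervalIntegrable
    _ = ∑ n ∈ range N, ∫ x in (n * δ + ε)..((n + 1 : ℕ) * δ + ε), stdG x := by
        rw [intervalIntegral.sum_integral_adjacent_intervals (a := fun n : ℕ => n * δ + ε)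
          fun _ _ => integrable_stdG.intervalIntegrable]
        simp
    _ ≤ ∑ n ∈ range N, ∫ x in Ioc (n * δ - ε) (n * δ + ε), Gde δ ε x :=
        sum_le_sum fun n _ => integral_stdG_le_setIntegral_Gde hδ0.le hε0 n
    _ ≤ ∫ x, Gde δ ε x :=
        sum_setIntegral_le_integral integrable_Gde (ae_of_all _ (Gde_nonneg hδ0.le hε0.le)) _
          (fun _ _ => measurableSet_Ioc)
          ((pairwise_disjoint_Ioc_mul_sub_mul_add hε0.le (by linarith)).set_pairwise _)
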